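/- arXiv:2506.13160 — 9 statements merged into one kernel-verified Lean document; each statement's English description precedes it below -/
import Mathlib

section
/- Let Ω be a measurable space, ν a σ-finite measure on Ω, f₀, f₁ : Ω → ℝ≥0∞ measurable, and suppose μ₀ := ν.withDensity f₀ and μ₁ := ν.withDensity f₁ are probability measures. Let φ* be a likelihood-ratio test with threshold l ∈ ℝ≥0∞ and randomization q ∈ [0,1]. Then for every measurable φ : Ω → ℝ with 0 ≤ φ(x) ≤ 1 for all x: if ∫ φ dμ₀ ≤ ∫ φ* dμ₀ then ∫ (1 − φ) dμ₁ ≥ ∫ (1 − φ*) dμ₁. -/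
/-!
Pointwise, `(φ* - φ)(f₁ - l f₀) ≥ 0`, since `φ* = 1` where `f₁ > l f₀` and `φ* = 0` where
`f₁ < l f₀`. Integrating against `ν` gives `∫ (φ* - φ) dμ₁ ≥ l ∫ (φ* - φ) dμ₀ ≥ 0`. To allow
`l = ∞` the argument is carried out in `ℝ≥0∞`, with the subtractions moved to the other side.
-/

open MeasureTheory Set
open scoped ENNReal

namespace ENNReal

variable {a b l g g' : ℝ≥0∞}

theorem mul_mul_le_mul_of_likelihoodRatio (h_zero : b < l * a → g' = 0) :
    l * (a * g') ≤ b * g' := by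
  rcases lt_or_ge b (l * a) with hlt | hle
  · simp [h_zero hlt]
  · rw [← mul_assoc]
    exact mul_le_mul_left hle g'

theorem mul_add_mul_le_of_likelihoodRatio (hg : g ≤ 1) (h_one : l * a < b → g' = 1)
    (h_zero : b < l * a → g' = 0) :
    b * g + l * (a * g') ≤ b * g' + l * (a * g) := by
  rcases lt_trichotomy (l * a) b with hlt | heq | hgt
  · have hsplit : l * a = l * a * g + l * a * (1 - g) := by
      rw [← mul_add, add_tsub_cancel_of_le hg, mul_one]
    rw [h_one hlt]
    calc b * g + l * (a * 1) = b * g + (l * a * g + l * a * (1 - g)) := by rw [mul_one, ← hsplit]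
      _ ≤ b * g + (l * a * g + b * (1 - g)) := by gcongr
      _ = b * (g + (1 - g)) + l * (a * g) := by ring
      _ = b * 1 + l * (a * g) := by rw [add_tsub_cancel_of_le hg]
  · rw [← heq, ← mul_assoc, ← mul_assoc, add_comm]
  · simp only [h_zero hgt, mul_zero, zero_add, add_zero, ← mul_assoc]
    exact mul_le_mul_left hgt.le g

end ENNReal

section LikelihoodRatio

variable {Ω : Type*} [MeasurableSpace Ω] {ν : Measure Ω} {f₀ f₁ g g' : Ω → ℝ≥0∞} {l : ℝ≥0∞}

theorem lintegral_withDensity_le_of_likelihoodRatio (hf₀ : Measurable f₀) (hf₁ : Measurable f₁)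
    (hg : Measurable g) (hg' : Measurable g') (hg_le : ∀ x, g x ≤ 1)
    (hg'_one : ∀ x, l * f₀ x < f₁ x → g' x = 1) (hg'_zero : ∀ x, f₁ x < l * f₀ x → g' x = 0)
    (hg'_fin : ∫⁻ x, g' x ∂ν.withDensity f₁ ≠ ∞)
    (h : ∫⁻ x, g x ∂ν.withDensity f₀ ≤ ∫⁻ x, g' x ∂ν.withDensity f₀) :
    ∫⁻ x, g x ∂ν.withDensity f₁ ≤ ∫⁻ x, g' x ∂ν.withDensity f₁ := by
  simp only [lintegral_withDensity_eq_lintegral_mul ν hf₀,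
    lintegral_withDensity_eq_lintegral_mul ν hf₁, hg, hg', Pi.mul_apply] at h hg'_fin ⊢
  have hf₀g : Measurable fun x => f₀ x * g x := hf₀.mul hg
  have hf₀g' : Measurable fun x => f₀ x * g' x := hf₀.mul hg'
  have hf₁g : Measurable fun x => f₁ x * g x := hf₁.mul hg
  have hf₁g' : Measurable fun x => f₁ x * g' x := hf₁.mul hg'
  have h_sum : ∫⁻ x, f₁ x * g x ∂ν + l * ∫⁻ x, f₀ x * g' x ∂ν
      ≤ ∫⁻ x, f₁ x * g' x ∂ν + l * ∫⁻ x, f₀ x * g x ∂ν := by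
    rw [← lintegral_const_mul _ hf₀g', ← lintegral_const_mul _ hf₀g,
      ← lintegral_add_left hf₁g, ← lintegral_add_left hf₁g']
    exact lintegral_mono fun x =>
      ENNReal.mul_add_mul_le_of_likelihoodRatio (hg_le x) (hg'_one x) (hg'_zero x)
  have h_fin : l * ∫⁻ x, f₀ x * g' x ∂ν ≠ ∞ := by
    refine ne_top_of_le_ne_top hg'_fin ?_
    rw [← lintegral_const_mul _ hf₀g']
    exact lintegral_mono fun x => ENNReal.mul_mul_le_mul_of_likelihoodRatio (hg'_zero x)
  exact ENNReal.le_of_add_le_add_right h_fin (h_sum.trans (by gcongr))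

end LikelihoodRatio

section Test

variable {Ω : Type*} [MeasurableSpace Ω] {μ : Measure Ω} {φ : Ω → ℝ}

theorem integrable_of_mem_Icc [IsFiniteMeasure μ] (hφ : Measurable φ)
    (h01 : ∀ x, φ x ∈ Icc (0 : ℝ) 1) : Integrable φ μ :=
  .of_bound hφ.aestronglyMeasurable 1 <| ae_of_all _ fun x => by
    rw [Real.norm_eq_abs, abs_le]
    exact ⟨by linarith [(h01 x).1], (h01 x).2⟩

theorem ofReal_integral_eq_lintegral_of_mem_Icc [IsFiniteMeasure μ] (hφ : Measurable φ)
    (h01 : ∀ x, φ x ∈ Icc (0 : ℝ) 1) :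
    ENNReal.ofReal (∫ x, φ x ∂μ) = ∫⁻ x, ENNReal.ofReal (φ x) ∂μ :=
  ofReal_integral_eq_lintegral_ofReal (integrable_of_mem_Icc hφ h01)
    (ae_of_all _ fun x => (h01 x).1)

theorem integral_le_integral_iff_lintegral_ofReal_le [IsFiniteMeasure μ] {ψ : Ω → ℝ}
    (hφ : Measurable φ) (hφ01 : ∀ x, φ x ∈ Icc (0 : ℝ) 1)
    (hψ : Measurable ψ) (hψ01 : ∀ x, ψ x ∈ Icc (0 : ℝ) 1) :
    ∫ x, φ x ∂μ ≤ ∫ x, ψ x ∂μ ↔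
      ∫⁻ x, ENNReal.ofReal (φ x) ∂μ ≤ ∫⁻ x, ENNReal.ofReal (ψ x) ∂μ := by
  rw [← ofReal_integral_eq_lintegral_of_mem_Icc hφ hφ01,
    ← ofReal_integral_eq_lintegral_of_mem_Icc hψ hψ01,
    ENNReal.ofReal_le_ofReal_iff (integral_nonneg fun x => (hψ01 x).1)]

theorem integral_one_sub_of_mem_Icc [IsProbabilityMeasure μ] (hφ : Measurable φ)
    (h01 : ∀ x, φ x ∈ Icc (0 : ℝ) 1) : ∫ x, (1 - φ x) ∂μ = 1 - ∫ x, φ x ∂μ := by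
  rw [integral_sub (integrable_const 1) (integrable_of_mem_Icc hφ h01), integral_const,
    probReal_univ, one_smul]

end Test

section LikelihoodRatioTest

variable {Ω : Type*} {f₀ f₁ : Ω → ℝ≥0∞} {l : ℝ≥0∞} {q : ℝ}

noncomputable def likelihoodRatioTest (f₀ f₁ : Ω → ℝ≥0∞) (l : ℝ≥0∞) (q : ℝ) (x : Ω) : ℝ :=
  if l * f₀ x < f₁ x then 1 else if f₁ x = l * f₀ x then q else 0

theorem measurable_likelihoodRatioTest [MeasurableSpace Ω] (hf₀ : Measurable f₀)
    (hf₁ : Measurable f₁) :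
    Measurable (likelihoodRatioTest f₀ f₁ l q) :=
  Measurable.ite (measurableSet_lt (hf₀.const_mul l) hf₁) measurable_const
    (Measurable.ite (measurableSet_eq_fun hf₁ (hf₀.const_mul l)) measurable_const measurable_const)

theorem likelihoodRatioTest_mem_Icc (hq : q ∈ Icc (0 : ℝ) 1) (x : Ω) :
    likelihoodRatioTest f₀ f₁ l q x ∈ Icc (0 : ℝ) 1 := by
  unfold likelihoodRatioTest
  split_ifs <;> simp [hq.1, hq.2]

theorem likelihoodRatioTest_of_lt {x : Ω} (h : l * f₀ x < f₁ x) :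
    likelihoodRatioTest f₀ f₁ l q x = 1 := if_pos h

theorem likelihoodRatioTest_of_gt {x : Ω} (h : f₁ x < l * f₀ x) :
    likelihoodRatioTest f₀ f₁ l q x = 0 := by
  rw [likelihoodRatioTest, if_neg h.not_gt, if_neg h.ne]

end LikelihoodRatioTest

theorem neyman_pearson_general {Ω : Type*} [MeasurableSpace Ω]
    (ν : Measure Ω)
    (f₀ f₁ : Ω → ℝ≥0∞) (hf₀ : Measurable f₀) (hf₁ : Measurable f₁)
    (hμ₀ : IsProbabilityMeasure (ν.withDensity f₀))
    (hμ₁ : IsProbabilityMeasure (ν.withDensity f₁))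
    (l : ℝ≥0∞) (q : ℝ) (hq : q ∈ Set.Icc (0 : ℝ) 1)
    (φstar : Ω → ℝ)
    (hφstar : ∀ x, φstar x =
      if l * f₀ x < f₁ x then 1 else if f₁ x = l * f₀ x then q else 0)
    (φ : Ω → ℝ) (hφmeas : Measurable φ) (hφ01 : ∀ x, 0 ≤ φ x ∧ φ x ≤ 1)
    (h : ∫ x, φ x ∂(ν.withDensity f₀) ≤ ∫ x, φstar x ∂(ν.withDensity f₀)) :
    ∫ x, (1 - φ x) ∂(ν.withDensity f₁) ≥ ∫ x, (1 - φstar x) ∂(ν.withDensity f₁) := by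
  obtain rfl : φstar = likelihoodRatioTest f₀ f₁ l q := funext hφstar
  have hφstar_meas := measurable_likelihoodRatioTest (l := l) (q := q) hf₀ hf₁
  have hφstar01 := likelihoodRatioTest_mem_Icc (f₀ := f₀) (f₁ := f₁) (l := l) hq
  rw [ge_iff_le, integral_one_sub_of_mem_Icc hφmeas hφ01,
    integral_one_sub_of_mem_Icc hφstar_meas hφstar01, sub_le_sub_iff_left,
    integral_le_integral_iff_lintegral_ofReal_le hφmeas hφ01 hφstar_meas hφstar01]
  exact lintegral_withDensity_le_of_likelihoodRatio hf₀ hf₁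
    hφmeas.ennreal_ofReal hφstar_meas.ennreal_ofReal
    (fun x => ENNReal.ofReal_le_one.mpr (hφ01 x).2)
    (fun x hx => by rw [likelihoodRatioTest_of_lt hx, ENNReal.ofReal_one])
    (fun x hx => by rw [likelihoodRatioTest_of_gt hx, ENNReal.ofReal_zero])
    (by rw [← ofReal_integral_eq_lintegral_of_mem_Icc hφstar_meas hφstar01]
        exact ENNReal.ofReal_ne_top)
    ((integral_le_integral_iff_lintegral_ofReal_le hφmeas hφ01 hφstar_meas hφstar01).1 h)

/-- Lemma A2 (Neyman–Pearson): among all tests whose type-I error does not exceed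
that of a likelihood-ratio test, the likelihood-ratio test minimizes type-II error. -/
theorem neyman_pearson {Ω : Type*} [MeasurableSpace Ω]
    (ν : Measure Ω) [SigmaFinite ν]
    (f₀ f₁ : Ω → ℝ≥0∞) (hf₀ : Measurable f₀) (hf₁ : Measurable f₁)
    (hμ₀ : IsProbabilityMeasure (ν.withDensity f₀))
    (hμ₁ : IsProbabilityMeasure (ν.withDensity f₁))
    (l : ℝ≥0∞) (q : ℝ) (hq : q ∈ Set.Icc (0 : ℝ) 1)
    (φstar : Ω → ℝ)
    (hφstar : ∀ x, φstar x =
      if l * f₀ x < f₁ x then 1 else if f₁ x = l * f₀ x then q else 0)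
    (φ : Ω → ℝ) (hφmeas : Measurable φ) (hφ01 : ∀ x, 0 ≤ φ x ∧ φ x ≤ 1)
    (h : ∫ x, φ x ∂(ν.withDensity f₀) ≤ ∫ x, φstar x ∂(ν.withDensity f₀)) :
    ∫ x, (1 - φ x) ∂(ν.withDensity f₁) ≥ ∫ x, (1 - φstar x) ∂(ν.withDensity f₁) :=
  neyman_pearson_general ν f₀ f₁ hf₀ hf₁ hμ₀ hμ₁ l q hq φstar hφstar φ hφmeas hφ01 h
end

section
/- Let Ω be a measurable space, μ a probability measure on Ω, and T : Ω → ℝ≥0∞ a measurable function. Then for every α ∈ [0,1] there exist l ∈ ℝ≥0∞ and q ∈ ℝ with 0 ≤ q ≤ 1 such that (μ {x | T x > l}).toReal + q * (μ {x | T x = l}).toReal = α. -/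
open MeasureTheory
open scoped ENNReal

/-- For any likelihood-ratio statistic `T`, one can choose a threshold `l` and a
randomization probability `q` so that the randomized threshold test has type-I error
exactly `α` under `μ`. -/
theorem exists_threshold_randomization {Ω : Type*} [MeasurableSpace Ω]
    (μ : Measure Ω) [IsProbabilityMeasure μ]
    (T : Ω → ℝ≥0∞) (hT : Measurable T)
    (α : ℝ) (hα : α ∈ Set.Icc (0 : ℝ) 1) :
    ∃ (l : ℝ≥0∞) (q : ℝ), 0 ≤ q ∧ q ≤ 1 ∧
      (μ {x | T x > l}).toReal + q * (μ {x | T x = l}).toReal = α := by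
  obtain ⟨hα0, hα1⟩ := hα
  have hmeasG : ∀ l : ℝ≥0∞, MeasurableSet {x | T x > l} := fun l => hT measurableSet_Ioi
  have hfin : ∀ s : Set Ω, μ s ≠ ∞ := fun s => measure_ne_top μ s
  set S : Set ℝ≥0∞ := {l | (μ {x | T x > l}).toReal ≤ α} with hS
  have hStop : (⊤ : ℝ≥0∞) ∈ S := by
    have : {x | T x > ⊤} = ∅ := by
      ext x; simp [not_top_lt]
    simp [hS, this, hα0]
  set l₀ := sInf S with hl₀
  -- Step A : (μ {T > l₀}).toReal ≤ α
  have stepA : μ {x | T x > l₀} ≤ ENNReal.ofReal α := by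
    obtain ⟨u, hu_anti, hu_tend, hu_mem⟩ :=
      exists_seq_tendsto_sInf ⟨⊤, hStop⟩ (OrderBot.bddBelow S)
    have hsub : {x | T x > l₀} ⊆ ⋃ n, {x | T x > u n} := by
      intro x hx
      have : ∀ᶠ n in Filter.atTop, u n < T x := hu_tend.eventually_lt_const hx
      obtain ⟨n, hn⟩ := this.exists
      exact Set.mem_iUnion.2 ⟨n, hn⟩
    have hmono : Monotone fun n => {x | T x > u n} := by
      intro m n hmn x hx
      exact lt_of_le_of_lt (hu_anti hmn) hx
    calc μ {x | T x > l₀} ≤ μ (⋃ n, {x | T x > u n}) := measure_mono hsub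
      _ = ⨆ n, μ {x | T x > u n} := hmono.measure_iUnion
      _ ≤ ENNReal.ofReal α := by
        refine iSup_le fun n => ?_
        exact (ENNReal.le_ofReal_iff_toReal_le (hfin _) hα0).2 (hu_mem n)
  -- Step B : α ≤ (μ {T ≥ l₀}).toReal
  have stepB : ENNReal.ofReal α ≤ μ {x | T x ≥ l₀} := by
    rcases eq_or_ne l₀ 0 with h0 | h0
    · have : {x | T x ≥ l₀} = Set.univ := by
        ext x; simp [h0]
      rw [this, measure_univ]
      exact ENNReal.ofReal_le_one.2 hα1
    · obtain ⟨u, hu_mono, hu_mem, hu_tend⟩ :=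
        exists_seq_strictMono_tendsto' (pos_iff_ne_zero.2 h0)
      have hnotS : ∀ n, u n ∉ S := fun n h => not_lt_of_ge (csInf_le (OrderBot.bddBelow S) h)
        (hu_mem n).2
      have heq : {x | T x ≥ l₀} = ⋂ n, {x | T x > u n} := by
        ext x
        simp only [Set.mem_setOf_eq, Set.mem_iInter]
        constructor
        · exact fun h n => lt_of_lt_of_le (hu_mem n).2 h
        · intro h
          exact le_of_tendsto hu_tend (Filter.Eventually.of_forall fun n => (h n).le)
      have hanti : Antitone fun n => {x | T x > u n} := by
        intro m n hmn x hx
        exact lt_of_le_of_lt (hu_mono.monotone hmn) hx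
      rw [heq, hanti.measure_iInter (fun n => (hmeasG _).nullMeasurableSet) ⟨0, hfin _⟩]
      refine le_iInf fun n => ?_
      have : α < (μ {x | T x > u n}).toReal := lt_of_not_ge (hnotS n)
      exact le_of_lt ((ENNReal.ofReal_lt_iff_lt_toReal hα0 (hfin _)).2 this)
  have hA : (μ {x | T x > l₀}).toReal ≤ α :=
    ENNReal.toReal_le_of_le_ofReal hα0 stepA
  -- decompose {T ≥ l₀}
  have hsplit : μ {x | T x ≥ l₀} = μ {x | T x > l₀} + μ {x | T x = l₀} := by
    have hunion : {x | T x ≥ l₀} = {x | T x > l₀} ∪ {x | T x = l₀} := by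
      ext x
      simp only [Set.mem_setOf_eq, Set.mem_union]
      exact ⟨fun h => h.lt_or_eq.imp id Eq.symm, fun h => h.elim le_of_lt ge_of_eq⟩
    have hdisj : Disjoint {x | T x > l₀} {x | T x = l₀} := by
      rw [Set.disjoint_left]
      intro x hx hx'
      exact absurd hx' (ne_of_gt hx)
    rw [hunion, measure_union hdisj (hT (measurableSet_singleton l₀))]
  have hB : α ≤ (μ {x | T x > l₀}).toReal + (μ {x | T x = l₀}).toReal := by
    have h1 : α ≤ (μ {x | T x ≥ l₀}).toReal :=
      ENNReal.toReal_ofReal hα0 ▸ ENNReal.toReal_mono (hfin _) stepB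
    rwa [hsplit, ENNReal.toReal_add (hfin _) (hfin _)] at h1
  set a := (μ {x | T x > l₀}).toReal
  set m := (μ {x | T x = l₀}).toReal
  have hm0 : 0 ≤ m := ENNReal.toReal_nonneg
  rcases eq_or_ne m 0 with hm | hm
  · refine ⟨l₀, 0, le_refl 0, zero_le_one, ?_⟩
    rw [hm] at hB
    simp only [zero_mul, add_zero]
    linarith
  · refine ⟨l₀, (α - a) / m, ?_, ?_, ?_⟩
    · exact div_nonneg (by linarith) hm0
    · rw [div_le_one (lt_of_le_of_ne hm0 (Ne.symm hm))]
      linarith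
    · rw [div_mul_cancel₀ _ hm]; ring
end

section
/- Let d, K ∈ ℕ with K ≥ 1, let ν be a probability measure on (Fin d → ℝ), let f : (Fin d → ℝ) → ℕ be measurable, let ŷ ∈ ℕ, let x, r : Fin K → (Fin d → ℝ), let W ∈ [0,1] and τ ∈ ℝ. For each k, let μ₀ᵏ := Measure.map (fun ε => x k + r k + ε) ν and μ₁ᵏ := Measure.map (fun ε => x k + ε) ν. Suppose (i) for every k, (μ₀ᵏ (f ⁻¹' {ŷ})).toReal ≥ W, and (ii) for every k, β₂*(1 − W; μ₀ᵏ, μ₁ᵏ) > τ. Then for every k, (μ₁ᵏ (f ⁻¹' {ŷ})).toReal > τ; in particular the stability S := min over k of ν {ε | f (x k + ε) = ŷ} satisfies S > τ. -/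
/-! The rejection region of the watermark test is where the model does not predict `ŷ`.
Its level is `1 - μ₀(f = ŷ) ≤ 1 - W`, so the optimal type-II error is at most its type-II error
`μ₁(f = ŷ)`, which is the probability that a noisy clean sample is predicted as `ŷ`. -/

open MeasureTheory

/-- The optimal type-II error at type-I level `α` for testing the null `μ₀`
against the alternative `μ₁`. -/
noncomputable def beta2Star {Ω : Type*} [MeasurableSpace Ω]
    (α : ℝ) (μ₀ μ₁ : Measure Ω) : ℝ :=
  ⨅ φ : {φ : Ω → ℝ // Measurable φ ∧ (∀ x, 0 ≤ φ x ∧ φ x ≤ 1) ∧ ∫ x, φ x ∂μ₀ ≤ α},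
    ∫ x, (1 - φ.1 x) ∂μ₁

section Beta2Star

variable {Ω : Type*} [MeasurableSpace Ω] {α : ℝ} {μ₀ μ₁ : Measure Ω}

lemma beta2Star_le_integral {φ : Ω → ℝ} (hφ : Measurable φ) (hφ_mem : ∀ x, 0 ≤ φ x ∧ φ x ≤ 1)
    (hlevel : ∫ x, φ x ∂μ₀ ≤ α) : beta2Star α μ₀ μ₁ ≤ ∫ x, (1 - φ x) ∂μ₁ := by
  refine ciInf_le ⟨0, ?_⟩ (⟨φ, hφ, hφ_mem, hlevel⟩ :
    {φ : Ω → ℝ // Measurable φ ∧ (∀ x, 0 ≤ φ x ∧ φ x ≤ 1) ∧ ∫ x, φ x ∂μ₀ ≤ α})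
  rintro _ ⟨ψ, rfl⟩
  exact integral_nonneg fun x => sub_nonneg.mpr (ψ.2.2.1 x).2

lemma beta2Star_le_measureReal {s : Set Ω} (hs : MeasurableSet s) (hlevel : μ₀.real sᶜ ≤ α) :
    beta2Star α μ₀ μ₁ ≤ μ₁.real s := by
  have htest_mem : ∀ x, 0 ≤ sᶜ.indicator (1 : Ω → ℝ) x ∧ sᶜ.indicator (1 : Ω → ℝ) x ≤ 1 :=
    fun x => ⟨Set.indicator_nonneg (fun _ _ => zero_le_one) x,
      Set.indicator_le_self' (fun _ _ => zero_le_one) x⟩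
  have hcompl : (fun x => 1 - sᶜ.indicator (1 : Ω → ℝ) x) = s.indicator 1 := by
    rw [Set.indicator_compl]
    simp
  calc beta2Star α μ₀ μ₁ ≤ ∫ x, (1 - sᶜ.indicator (1 : Ω → ℝ) x) ∂μ₁ :=
        beta2Star_le_integral (measurable_const.indicator hs.compl) htest_mem
          (by rwa [integral_indicator_one hs.compl])
    _ = μ₁.real s := by rw [hcompl, integral_indicator_one hs]

lemma beta2Star_le_measureReal_of_le_measureReal [IsProbabilityMeasure μ₀] {s : Set Ω}
    (hs : MeasurableSet s) {W : ℝ} (hW : W ≤ μ₀.real s) :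
    beta2Star (1 - W) μ₀ μ₁ ≤ μ₁.real s :=
  beta2Star_le_measureReal hs (by rw [probReal_compl_eq_one_sub hs]; linarith)

end Beta2Star

theorem general_condition_certified_watermarking_general
    {d K : ℕ} (hK : 1 ≤ K)
    (ν : Measure (Fin d → ℝ)) [IsProbabilityMeasure ν]
    (f : (Fin d → ℝ) → ℕ) (hf : Measurable f) (yhat : ℕ)
    (x r : Fin K → (Fin d → ℝ))
    (W : ℝ) (τ : ℝ)
    (μ₀ μ₁ : Fin K → Measure (Fin d → ℝ))
    (hμ₀ : ∀ k, μ₀ k = Measure.map (fun ε => x k + r k + ε) ν)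
    (hμ₁ : ∀ k, μ₁ k = Measure.map (fun ε => x k + ε) ν)
    (hWR : ∀ k, ((μ₀ k) (f ⁻¹' {yhat})).toReal ≥ W)
    (hβ : ∀ k, beta2Star (1 - W) (μ₀ k) (μ₁ k) > τ) :
    (∀ k, ((μ₁ k) (f ⁻¹' {yhat})).toReal > τ) ∧
      (⨅ k : Fin K, (ν {ε | f (x k + ε) = yhat}).toReal) > τ := by
  have hA : MeasurableSet (f ⁻¹' {yhat}) := hf (measurableSet_singleton _)
  have hstable : ∀ k, τ < (μ₁ k).real (f ⁻¹' {yhat}) := fun k => by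
    have : IsProbabilityMeasure (μ₀ k) :=
      hμ₀ k ▸ Measure.isProbabilityMeasure_map (measurable_const_add _).aemeasurable
    exact (hβ k).trans_le (beta2Star_le_measureReal_of_le_measureReal hA (hWR k))
  have hshift : ∀ k, ν {ε | f (x k + ε) = yhat} = μ₁ k (f ⁻¹' {yhat}) := fun k => by
    rw [hμ₁ k, Measure.map_apply (measurable_const_add (x k)) hA]
    rfl
  refine ⟨hstable, ?_⟩
  have : Nonempty (Fin K) := ⟨⟨0, hK⟩⟩
  obtain ⟨k, hk⟩ := exists_eq_ciInf_of_finite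
    (f := fun k => (ν {ε | f (x k + ε) = yhat}).toReal)
  rw [← hk, hshift k]
  exact hstable k

/-- Theorem 1 (General Condition of Certified Dataset Watermarking). -/
theorem general_condition_certified_watermarking
    {d K : ℕ} (hK : 1 ≤ K)
    (ν : Measure (Fin d → ℝ)) [IsProbabilityMeasure ν]
    (f : (Fin d → ℝ) → ℕ) (hf : Measurable f) (yhat : ℕ)
    (x r : Fin K → (Fin d → ℝ))
    (W : ℝ) (hW : W ∈ Set.Icc (0 : ℝ) 1) (τ : ℝ)
    (μ₀ μ₁ : Fin K → Measure (Fin d → ℝ))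
    (hμ₀ : ∀ k, μ₀ k = Measure.map (fun ε => x k + r k + ε) ν)
    (hμ₁ : ∀ k, μ₁ k = Measure.map (fun ε => x k + ε) ν)
    (hWR : ∀ k, ((μ₀ k) (f ⁻¹' {yhat})).toReal ≥ W)
    (hβ : ∀ k, beta2Star (1 - W) (μ₀ k) (μ₁ k) > τ) :
    (∀ k, ((μ₁ k) (f ⁻¹' {yhat})).toReal > τ) ∧
      (⨅ k : Fin K, (ν {ε | f (x k + ε) = yhat}).toReal) > τ :=
  general_condition_certified_watermarking_general hK ν f hf yhat x r W τ μ₀ μ₁ hμ₀ hμ₁ hWR hβ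
end

section
/- Let d ∈ ℕ, σ > 0, x̂, r : Fin d → ℝ with r ≠ 0, and l > 0. Let μ := Measure.pi (fun i => ProbabilityTheory.gaussianReal (x̂ i) (σ²)). Then (μ {z | Real.exp (−(∑ i, (z i − x̂ i) * r i) / σ² − (∑ i, (r i)²) / (2 * σ²)) > l}).toReal = 1 − Φ(σ * (Real.log l + (∑ i, (r i)²) / (2 * σ²)) / ‖r‖₂), where ‖r‖₂ = √(∑ i, (r i)²). -/
/-!
The statistic `∑ i, (z i - x̂ i) * (-r i)` is a linear functional of independent Gaussian
coordinates, hence centred Gaussian with variance `σ² ‖r‖²`. Taking logarithms, `Λ(z) > l` says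
exactly that this statistic exceeds `σ² log l + ‖r‖² / 2`, and standardising gives the tail
`1 - Φ((σ² log l + ‖r‖² / 2) / (σ ‖r‖))`.
-/

open MeasureTheory
open scoped ENNReal NNReal

noncomputable def stdNormalCDF (t : ℝ) : ℝ :=
  ((ProbabilityTheory.gaussianReal 0 1) (Set.Iic t)).toReal

open ProbabilityTheory

lemma map_pi_gaussianReal_sum {ι : Type*} [Fintype ι] (m : ι → ℝ) (v : ι → ℝ≥0) :
    (Measure.pi fun i => gaussianReal (m i) (v i)).map (fun z => ∑ i, z i)
      = gaussianReal (∑ i, m i) (∑ i, v i) := by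
  set P := Measure.pi fun i => gaussianReal (m i) (v i)
  have hcoord : ∀ i, HasGaussianLaw (fun z : ι → ℝ => z i) P := fun i =>
    (measurePreserving_eval (fun i => gaussianReal (m i) (v i)) i).hasLaw.hasGaussianLaw
  have hindep : iIndepFun (fun i (z : ι → ℝ) => z i) P :=
    iIndepFun_pi (X := fun _ => id) fun _ => aemeasurable_id
  rw [(hindep.hasGaussianLaw_fun_sum hcoord).map_eq_gaussianReal]
  congr
  · rw [integral_finsetSum _ fun i _ => (hcoord i).integrable]
    simp [P, integral_eval, integral_id_gaussianReal]
  · have hvar := variance_sum_pi (μ := fun i => gaussianReal (m i) (v i)) (X := fun _ => id)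
      fun _ => memLp_id_gaussianReal 2
    simp only [variance_id_gaussianReal, Finset.sum_fn, id] at hvar
    rw [hvar, ← NNReal.coe_sum, Real.toNNReal_coe]

lemma map_pi_gaussianReal_sum_sub_mul {ι : Type*} [Fintype ι] (m c : ι → ℝ) (v : ι → ℝ≥0) :
    (Measure.pi fun i => gaussianReal (m i) (v i)).map (fun z => ∑ i, (z i - m i) * c i)
      = gaussianReal 0 (∑ i, .mk (c i ^ 2) (sq_nonneg _) * v i) := by
  have hcoord : ∀ i, MeasurePreserving (fun x => (x - m i) * c i)
      (gaussianReal (m i) (v i)) (gaussianReal 0 (.mk (c i ^ 2) (sq_nonneg _) * v i)) := fun i => by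
    refine ⟨by fun_prop, ?_⟩
    rw [show (fun x => (x - m i) * c i) = (· * c i) ∘ (· - m i) from rfl,
      ← Measure.map_map (by fun_prop) (by fun_prop), gaussianReal_map_sub_const,
      gaussianReal_map_mul_const, sub_self, mul_zero]
  have hpi := measurePreserving_pi _ _ hcoord
  rw [show (fun z : ι → ℝ => ∑ i, (z i - m i) * c i)
      = (fun y => ∑ i, y i) ∘ (fun z i => (z i - m i) * c i) from rfl,
    ← Measure.map_map (by fun_prop) hpi.measurable, hpi.map_eq,
    map_pi_gaussianReal_sum, Finset.sum_const_zero]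

lemma gaussianReal_Ioi_toReal (μ : ℝ) {v : ℝ≥0} (hv : v ≠ 0) (t : ℝ) :
    (gaussianReal μ v (Set.Ioi t)).toReal = 1 - stdNormalCDF ((t - μ) / √(v : ℝ)) := by
  have hsd : 0 < √(v : ℝ) := Real.sqrt_pos.2 (by positivity)
  have hstd : (gaussianReal μ v).map (fun x => (x - μ) / √(v : ℝ)) = gaussianReal 0 1 := by
    rw [show (fun x => (x - μ) / √(v : ℝ)) = (· / √(v : ℝ)) ∘ (· - μ) from rfl,
      ← Measure.map_map (by fun_prop) (by fun_prop),
      gaussianReal_map_sub_const, gaussianReal_map_div_const, sub_self, zero_div]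
    congr 1
    ext
    simp [Real.sq_sqrt, hv]
  have hpre : Set.Ioi t = (fun x => (x - μ) / √(v : ℝ)) ⁻¹' Set.Ioi ((t - μ) / √(v : ℝ)) := by
    ext x
    simp [div_lt_div_iff_of_pos_right hsd]
  rw [hpre, ← Measure.map_apply (by fun_prop) measurableSet_Ioi, hstd, ← Set.compl_Iic,
    prob_compl_eq_one_sub measurableSet_Iic, ENNReal.toReal_sub_of_le prob_le_one ENNReal.one_ne_top,
    ENNReal.toReal_one, stdNormalCDF]

lemma lt_exp_div_sub_div_iff {l c : ℝ} (hl : 0 < l) (hc : 0 < c) (a b : ℝ) :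
    l < Real.exp (a / c - b / (2 * c)) ↔ c * Real.log l + b / 2 < a := by
  rw [← Real.log_lt_iff_lt_exp hl,
    show a / c - b / (2 * c) = (a - b / 2) / c by ring, lt_div_iff₀ hc]
  constructor <;> intro h <;> linarith

/-- Type-I error formula for the Gaussian likelihood-ratio test: under
`Z ∼ N(x̂, σ²I_d)`, the probability that the likelihood ratio
`Λ(Z) = exp(⟨Z − x̂, −r⟩/σ² − ‖r‖²/(2σ²))` exceeds `l` equals
`1 − Φ((log l + ½‖r‖²/σ²)·σ/‖r‖₂)`. -/
theorem gaussian_LR_tail (d : ℕ) (σ : ℝ≥0) (hσ : 0 < σ)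
    (xhat r : Fin d → ℝ) (hr : r ≠ 0) (l : ℝ) (hl : 0 < l) :
    ((Measure.pi fun i => ProbabilityTheory.gaussianReal (xhat i) (σ ^ 2))
        {z : Fin d → ℝ |
          Real.exp (-(∑ i, (z i - xhat i) * r i) / (σ : ℝ) ^ 2
              - (∑ i, (r i) ^ 2) / (2 * (σ : ℝ) ^ 2)) > l}).toReal
      = 1 - stdNormalCDF ((σ : ℝ) * (Real.log l + (∑ i, (r i) ^ 2) / (2 * (σ : ℝ) ^ 2))
            / Real.sqrt (∑ i, (r i) ^ 2)) := by
  set S := ∑ i, r i ^ 2 with hS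
  have hSpos : 0 < S := by
    obtain ⟨i, hi⟩ := Function.ne_iff.1 hr
    exact Finset.sum_pos' (fun i _ => sq_nonneg (r i)) ⟨i, Finset.mem_univ i, sq_pos_of_ne_zero hi⟩
  have hset : {z : Fin d → ℝ | Real.exp (-(∑ i, (z i - xhat i) * r i) / (σ : ℝ) ^ 2
        - S / (2 * (σ : ℝ) ^ 2)) > l}
      = (fun z => ∑ i, (z i - xhat i) * -r i) ⁻¹' Set.Ioi (σ ^ 2 * Real.log l + S / 2) := by
    ext z
    simpa [Finset.sum_neg_distrib] using lt_exp_div_sub_div_iff hl (by positivity) _ S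
  have hvar : ((∑ i, .mk ((-r i) ^ 2) (sq_nonneg _) * σ ^ 2 : ℝ≥0) : ℝ) = S * σ ^ 2 := by
    push_cast [neg_sq, hS, Finset.sum_mul]
    rfl
  have hvar_ne : (∑ i, .mk ((-r i) ^ 2) (sq_nonneg _) * σ ^ 2 : ℝ≥0) ≠ 0 := by
    rw [← NNReal.coe_ne_zero, hvar]
    positivity
  rw [hset, ← Measure.map_apply (by fun_prop) measurableSet_Ioi, map_pi_gaussianReal_sum_sub_mul,
    gaussianReal_Ioi_toReal _ hvar_ne, hvar, sub_zero, Real.sqrt_mul hSpos.le,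
    Real.sqrt_sq σ.coe_nonneg]
  congr 2
  field_simp
end

section
/- Let d ∈ ℕ, σ > 0, x̂, r : Fin d → ℝ, and t ∈ ℝ. Let μ₀ := Measure.pi (fun i => ProbabilityTheory.gaussianReal (x̂ i) (σ²)) and μ₁ := Measure.pi (fun i => ProbabilityTheory.gaussianReal (x̂ i − r i) (σ²)). Then β₂*(1 − Φ(t); μ₀, μ₁) = Φ(t − ‖r‖₂ / σ), where ‖r‖₂ = √(∑ i, (r i)²). -/
/-! The likelihood ratio of the two hypotheses is `exp ((⟪r, x̂⟫ - ‖r‖² / 2 - ⟪r, x⟫) / σ²)`,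
a decreasing function of the statistic `T x = ⟪r, x⟫`, so by the Neyman–Pearson lemma the
test rejecting the null when `T x ≤ c` is optimal at its own level. Under both hypotheses `T`
is a one-dimensional Gaussian of variance `‖r‖² σ²`, with means `⟪r, x̂⟫` and `⟪r, x̂⟫ - ‖r‖²`;
choosing `c` to make the level `1 - Φ(t)` gives type-II error `Φ(t - ‖r‖ / σ)`. -/

open MeasureTheory
open scoped ENNReal NNReal

open ProbabilityTheory

section NeymanPearson

variable {Ω : Type*} [MeasurableSpace Ω] {μ μ₀ μ₁ : Measure Ω} {φ ψ L : Ω → ℝ} {α k : ℝ}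

def IsTest (φ : Ω → ℝ) : Prop := Measurable φ ∧ ∀ x, 0 ≤ φ x ∧ φ x ≤ 1

lemma IsTest.integrable [IsFiniteMeasure μ] (hφ : IsTest φ) : Integrable φ μ :=
  .of_bound hφ.1.aestronglyMeasurable 1 <| .of_forall fun x => by
    rw [Real.norm_eq_abs, abs_le]
    exact ⟨by linarith [(hφ.2 x).1], (hφ.2 x).2⟩

lemma IsTest.integral_one_sub [IsProbabilityMeasure μ] (hφ : IsTest φ) :
    ∫ x, (1 - φ x) ∂μ = 1 - ∫ x, φ x ∂μ := by
  rw [integral_sub (integrable_const 1) hφ.integrable, integral_const, probReal_univ, one_smul]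

lemma beta2Star_eq_of_forall_le (hψ : IsTest ψ) (hψα : ∫ x, ψ x ∂μ₀ ≤ α)
    (hle : ∀ φ, IsTest φ → ∫ x, φ x ∂μ₀ ≤ α → ∫ x, (1 - ψ x) ∂μ₁ ≤ ∫ x, (1 - φ x) ∂μ₁) :
    beta2Star α μ₀ μ₁ = ∫ x, (1 - ψ x) ∂μ₁ := by
  have : Nonempty {φ : Ω → ℝ // Measurable φ ∧ (∀ x, 0 ≤ φ x ∧ φ x ≤ 1) ∧ ∫ x, φ x ∂μ₀ ≤ α} :=
    ⟨⟨ψ, hψ.1, hψ.2, hψα⟩⟩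
  have hle' := fun φ : {φ : Ω → ℝ // Measurable φ ∧ (∀ x, 0 ≤ φ x ∧ φ x ≤ 1) ∧
      ∫ x, φ x ∂μ₀ ≤ α} => hle φ.1 ⟨φ.2.1, φ.2.2.1⟩ φ.2.2.2
  exact le_antisymm (ciInf_le ⟨_, Set.forall_mem_range.2 hle'⟩ ⟨ψ, hψ.1, hψ.2, hψα⟩)
    (le_ciInf hle')

lemma integral_withDensity_ofReal (hLm : Measurable L) (hL : ∀ x, 0 ≤ L x) (g : Ω → ℝ) :
    ∫ x, g x ∂μ.withDensity (fun x => ENNReal.ofReal (L x)) = ∫ x, L x * g x ∂μ := by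
  refine (integral_withDensity_eq_integral_smul hLm.real_toNNReal g).trans
    (integral_congr_ae (.of_forall fun x => ?_))
  simp [NNReal.smul_def, Real.coe_toNNReal _ (hL x)]

theorem integral_le_integral_of_neymanPearson [IsFiniteMeasure μ₀] [IsFiniteMeasure μ₁]
    (hLm : Measurable L) (hL : ∀ x, 0 ≤ L x)
    (hμ₁ : μ₁ = μ₀.withDensity fun x => ENNReal.ofReal (L x)) (hk : 0 ≤ k)
    (hψ : IsTest ψ) (hψL : ∀ x, (k < L x → ψ x = 1) ∧ (L x < k → ψ x = 0))
    (hφ : IsTest φ) (hφψ : ∫ x, φ x ∂μ₀ ≤ ∫ x, ψ x ∂μ₀) :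
    ∫ x, φ x ∂μ₁ ≤ ∫ x, ψ x ∂μ₁ := by
  have hLint : Integrable L μ₀ := by
    refine (lintegral_ofReal_ne_top_iff_integrable hLm.aestronglyMeasurable (.of_forall hL)).1 ?_
    rw [← setLIntegral_univ, ← withDensity_apply _ .univ, ← hμ₁]
    exact measure_ne_top _ _
  have hψφ : Integrable (fun x => ψ x - φ x) μ₀ := hψ.integrable.sub hφ.integrable
  have hLψφ : Integrable (fun x => L x * (ψ x - φ x)) μ₀ :=
    hLint.mul_bdd (c := 1) (hψ.1.sub hφ.1).aestronglyMeasurable (.of_forall fun x => by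
      rw [Real.norm_eq_abs, abs_le]
      constructor <;> linarith [(hψ.2 x).1, (hψ.2 x).2, (hφ.2 x).1, (hφ.2 x).2])
  have hpointwise : ∀ x, 0 ≤ (ψ x - φ x) * (L x - k) := fun x => by
    rcases lt_trichotomy k (L x) with h | h | h
    · rw [(hψL x).1 h]
      exact mul_nonneg (by linarith [(hφ.2 x).2]) (by linarith)
    · rw [h, sub_self, mul_zero]
    · rw [(hψL x).2 h]
      exact mul_nonneg_of_nonpos_of_nonpos (by linarith [(hφ.2 x).1]) (by linarith)
  have : 0 ≤ ∫ x, ψ x ∂μ₁ - ∫ x, φ x ∂μ₁ :=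
    calc 0 ≤ k * (∫ x, ψ x ∂μ₀ - ∫ x, φ x ∂μ₀) := mul_nonneg hk (by linarith)
      _ ≤ k * (∫ x, ψ x ∂μ₀ - ∫ x, φ x ∂μ₀) + ∫ x, (ψ x - φ x) * (L x - k) ∂μ₀ :=
        le_add_of_nonneg_right (integral_nonneg hpointwise)
      _ = ∫ x, L x * (ψ x - φ x) ∂μ₀ := by
        have hsplit : ∫ x, (ψ x - φ x) * (L x - k) ∂μ₀
            = ∫ x, L x * (ψ x - φ x) ∂μ₀ - k * ∫ x, (ψ x - φ x) ∂μ₀ := by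
          rw [← integral_const_mul, ← integral_sub hLψφ (hψφ.const_mul k)]
          exact integral_congr_ae (.of_forall fun x => by ring)
        rw [hsplit, integral_sub hψ.integrable hφ.integrable]
        ring
      _ = ∫ x, ψ x ∂μ₁ - ∫ x, φ x ∂μ₁ := by
        rw [← integral_sub hψ.integrable hφ.integrable, hμ₁, integral_withDensity_ofReal hLm hL]
  linarith

theorem beta2Star_eq_of_neymanPearson [IsProbabilityMeasure μ₀] [IsProbabilityMeasure μ₁]
    (hLm : Measurable L) (hL : ∀ x, 0 ≤ L x)
    (hμ₁ : μ₁ = μ₀.withDensity fun x => ENNReal.ofReal (L x)) (hk : 0 ≤ k)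
    (hψ : IsTest ψ) (hψL : ∀ x, (k < L x → ψ x = 1) ∧ (L x < k → ψ x = 0)) :
    beta2Star (∫ x, ψ x ∂μ₀) μ₀ μ₁ = ∫ x, (1 - ψ x) ∂μ₁ :=
  beta2Star_eq_of_forall_le hψ le_rfl fun φ hφ hφψ => by
    rw [hψ.integral_one_sub, hφ.integral_one_sub]
    linarith [integral_le_integral_of_neymanPearson hLm hL hμ₁ hk hψ hψL hφ hφψ]

theorem beta2Star_self [IsProbabilityMeasure μ] (hα₀ : 0 ≤ α) (hα₁ : α ≤ 1) :
    beta2Star α μ μ = 1 - α := by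
  have hψ : IsTest fun _ : Ω => α := ⟨measurable_const, fun _ => ⟨hα₀, hα₁⟩⟩
  have := beta2Star_eq_of_neymanPearson (μ₀ := μ) (μ₁ := μ) (L := fun _ => 1) (k := 1)
    measurable_const (fun _ => zero_le_one) (by simp) zero_le_one hψ
    fun _ => ⟨(absurd · (lt_irrefl 1)), (absurd · (lt_irrefl 1))⟩
  simpa using this

end NeymanPearson

lemma MeasureTheory.Measure.pi_withDensity {ι : Type*} [Fintype ι] {X : ι → Type*}
    [∀ i, MeasurableSpace (X i)] (μ : ∀ i, Measure (X i)) [∀ i, IsProbabilityMeasure (μ i)] {f : ∀ i, X i → ℝ≥0∞}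
    (hf : ∀ i, Measurable (f i)) [∀ i, SigmaFinite ((μ i).withDensity (f i))] :
    Measure.pi (fun i => (μ i).withDensity (f i))
      = (Measure.pi μ).withDensity fun x => ∏ i, f i (x i) := by
  refine Measure.pi_eq fun s hs => ?_
  have hindicator : (Set.univ.pi s).indicator (fun x => ∏ i, f i (x i))
      = fun x => ∏ i, (s i).indicator (f i) (x i) := by
    ext x
    classical
    simp only [Set.indicator_apply, Set.mem_univ_pi, Finset.prod_ite_zero, Finset.mem_univ,
      forall_const]
  rw [withDensity_apply _ (.univ_pi hs), ← lintegral_indicator (.univ_pi hs), hindicator,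
    lintegral_prod_eq_prod_lintegral_of_indepFun _ _
      (iIndepFun_pi fun i => ((hf i).indicator (hs i)).aemeasurable)
      fun i => ((hf i).indicator (hs i)).comp (measurable_pi_apply i)]
  refine Finset.prod_congr rfl fun i _ => ?_
  rw [(measurePreserving_eval μ i).lintegral_comp ((hf i).indicator (hs i)),
    lintegral_indicator (hs i), withDensity_apply _ (hs i)]

lemma stdNormalCDF_neg (t : ℝ) : stdNormalCDF (-t) = 1 - stdNormalCDF t := by
  have : NullSingletonClass (gaussianReal 0 1) := nullSingletonClass_gaussianReal one_ne_zero
  have hneg : (gaussianReal 0 1).map (fun x => -x) = gaussianReal 0 1 := by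
    simpa using gaussianReal_map_neg (μ := 0) (v := 1)
  calc stdNormalCDF (-t) = ((gaussianReal 0 1).map (fun x => -x)).real (Set.Iic (-t)) := by
        rw [hneg]; rfl
    _ = (gaussianReal 0 1).real (Set.Iio t)ᶜ := by
        rw [map_measureReal_apply (by fun_prop) measurableSet_Iic]
        congr 1; ext; simp
    _ = 1 - stdNormalCDF t := by
        rw [probReal_compl_eq_one_sub measurableSet_Iio, measureReal_congr Iio_ae_eq_Iic]; rfl

lemma stdNormalCDF_nonneg (t : ℝ) : 0 ≤ stdNormalCDF t := ENNReal.toReal_nonneg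

lemma stdNormalCDF_le_one (t : ℝ) : stdNormalCDF t ≤ 1 := measureReal_le_one

lemma ProbabilityTheory.HasLaw.measureReal_le_of_gaussianReal {Ω : Type*} [MeasurableSpace Ω]
    {P : Measure Ω} {X : Ω → ℝ} {m : ℝ} {v : ℝ≥0} (hX : HasLaw X (gaussianReal m v) P)
    (hv : v ≠ 0) (c : ℝ) :
    P.real {ω | X ω ≤ c} = stdNormalCDF ((c - m) / √v) := by
  have hsqrt : 0 < √(v : ℝ) := Real.sqrt_pos.2 (by positivity)
  have hstd : HasLaw (fun ω => (X ω - m) / √v) (gaussianReal 0 1) P := by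
    convert gaussianReal_div_const (gaussianReal_sub_const hX m) √v using 2
    · simp
    · ext; simp [Real.sq_sqrt, hv]
  have hset : {ω | X ω ≤ c} = {ω | (X ω - m) / √v ≤ (c - m) / √v} := by
    ext ω; simp [div_le_div_iff_of_pos_right hsqrt]
  rw [hset, measureReal_def, hstd.measure_eq measurableSet_Iic]
  rfl

lemma hasLaw_sum_mul_pi_gaussianReal {ι : Type*} [Fintype ι] (m a : ι → ℝ) (v : ι → ℝ≥0) :
    HasLaw (fun x => ∑ i, a i * x i)
      (gaussianReal (∑ i, a i * m i) (∑ i, a i ^ 2 * v i).toNNReal)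
      (Measure.pi fun i => gaussianReal (m i) (v i)) := by
  set P := Measure.pi fun i => gaussianReal (m i) (v i)
  have heval (i : ι) : HasLaw (fun x : ι → ℝ => x i) (gaussianReal (m i) (v i)) P :=
    (measurePreserving_eval (fun i => gaussianReal (m i) (v i)) i).hasLaw
  have hind : iIndepFun (fun i (x : ι → ℝ) => a i * x i) P :=
    iIndepFun_pi (X := fun i y => a i * y) fun i => by fun_prop
  have hlaw : HasGaussianLaw (fun x : ι → ℝ => ∑ i, a i * x i) P :=
    hind.hasGaussianLaw_fun_sum fun i => (heval i).hasGaussianLaw.fun_smul (a i)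
  have hL2 (i : ι) : MemLp (fun x : ι → ℝ => a i * x i) 2 P :=
    (heval i).hasGaussianLaw.memLp_two.const_mul (a i)
  have hvar := IndepFun.variance_sum (s := Finset.univ) (fun i _ => hL2 i)
    fun i _ j _ hij => hind.indepFun hij
  rw [Finset.sum_fn] at hvar
  refine ⟨hlaw.aemeasurable, ?_⟩
  rw [hlaw.map_eq_gaussianReal, hvar, integral_finsetSum _ fun i _ => (hL2 i).integrable one_le_two]
  simp [integral_const_mul, variance_const_mul, (heval _).integral_eq, (heval _).variance_eq]

lemma gaussianReal_sub_eq_withDensity (m ρ : ℝ) {v : ℝ≥0} (hv : v ≠ 0) :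
    gaussianReal (m - ρ) v = (gaussianReal m v).withDensity
      fun y => ENNReal.ofReal (Real.exp ((ρ * m - ρ ^ 2 / 2 - ρ * y) / v)) := by
  have hratio (y : ℝ) : gaussianPDFReal (m - ρ) v y
      = gaussianPDFReal m v y * Real.exp ((ρ * m - ρ ^ 2 / 2 - ρ * y) / v) := by
    have : (v : ℝ) ≠ 0 := by exact_mod_cast hv
    rw [gaussianPDFReal, gaussianPDFReal, mul_assoc _ (Real.exp _), ← Real.exp_add]
    congr 2
    field_simp
    ring
  rw [gaussianReal_of_var_ne_zero _ hv, gaussianReal_of_var_ne_zero _ hv,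
    ← withDensity_mul _ (measurable_gaussianPDF m v) (by fun_prop)]
  congr 1
  ext y
  rw [Pi.mul_apply, gaussianPDF, gaussianPDF, hratio,
    ENNReal.ofReal_mul (gaussianPDFReal_nonneg m v y)]

lemma pi_gaussianReal_sub_eq_withDensity {ι : Type*} [Fintype ι] (m ρ : ι → ℝ) {v : ℝ≥0}
    (hv : v ≠ 0) :
    Measure.pi (fun i => gaussianReal (m i - ρ i) v)
      = (Measure.pi fun i => gaussianReal (m i) v).withDensity fun x => ENNReal.ofReal
          (Real.exp ((∑ i, ρ i * m i - (∑ i, ρ i ^ 2) / 2 - ∑ i, ρ i * x i) / v)) := by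
  simp_rw [gaussianReal_sub_eq_withDensity _ _ hv]
  rw [Measure.pi_withDensity _ fun i => by fun_prop]
  congr 1
  ext x
  rw [← ENNReal.ofReal_prod_of_nonneg fun i _ => (Real.exp_pos _).le, ← Real.exp_sum,
    ← Finset.sum_div, Finset.sum_sub_distrib, Finset.sum_sub_distrib, Finset.sum_div]

lemma measureReal_sum_mul_le_pi_gaussianReal {ι : Type*} [Fintype ι] (m r : ι → ℝ) {v : ℝ≥0}
    (hv : v ≠ 0) (hr : 0 < ∑ i, r i ^ 2) (c : ℝ) :
    (Measure.pi fun i => gaussianReal (m i) v).real {x | ∑ i, r i * x i ≤ c}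
      = stdNormalCDF ((c - ∑ i, r i * m i) / (√(∑ i, r i ^ 2) * √v)) := by
  have hvar : ∑ i, r i ^ 2 * (v : ℝ) = (∑ i, r i ^ 2) * v := Finset.sum_mul _ _ _ |>.symm
  have hvar_ne : (∑ i, r i ^ 2 * (v : ℝ)).toNNReal ≠ 0 := by
    rw [hvar]
    exact (Real.toNNReal_pos.2 (mul_pos hr (by positivity))).ne'
  rw [(hasLaw_sum_mul_pi_gaussianReal m r fun _ => v).measureReal_le_of_gaussianReal hvar_ne,
    hvar, Real.coe_toNNReal _ (by positivity), Real.sqrt_mul hr.le]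

theorem beta2Star_pi_gaussianReal_of_sum_sq_pos {ι : Type*} [Fintype ι] (m r : ι → ℝ)
    {v : ℝ≥0} (hv : v ≠ 0) (hr : 0 < ∑ i, r i ^ 2) (t : ℝ) :
    beta2Star (1 - stdNormalCDF t) (Measure.pi fun i => gaussianReal (m i) v)
        (Measure.pi fun i => gaussianReal (m i - r i) v)
      = stdNormalCDF (t - √(∑ i, r i ^ 2) / √v) := by
  set N := ∑ i, r i ^ 2
  set M := ∑ i, r i * m i
  set T : (ι → ℝ) → ℝ := fun x => ∑ i, r i * x i
  have hM₁ : ∑ i, r i * (m i - r i) = M - N := by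
    simp only [M, N, mul_sub, Finset.sum_sub_distrib, sq]
  have hT (m' : ι → ℝ) (c' : ℝ) : (Measure.pi fun i => gaussianReal (m' i) v).real {x | T x ≤ c'}
      = stdNormalCDF ((c' - ∑ i, r i * m' i) / (√N * √v)) :=
    measureReal_sum_mul_le_pi_gaussianReal m' r hv hr c'
  set c := M - t * (√N * √v)
  set S := {x | T x ≤ c}
  have hS : MeasurableSet S := measurableSet_le (by fun_prop) measurable_const
  set ψ : (ι → ℝ) → ℝ := S.indicator 1
  have hψ : IsTest ψ :=
    ⟨measurable_one.indicator hS, fun x => by by_cases hx : x ∈ S <;> simp [ψ, hx]⟩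
  have hψL (x : ι → ℝ) :
      (Real.exp ((M - N / 2 - c) / v) < Real.exp ((M - N / 2 - T x) / v) → ψ x = 1) ∧
      (Real.exp ((M - N / 2 - T x) / v) < Real.exp ((M - N / 2 - c) / v) → ψ x = 0) := by
    simp only [Real.exp_lt_exp, div_lt_div_iff_of_pos_right (by positivity : (0 : ℝ) < v)]
    exact ⟨fun h => Set.indicator_of_mem (show T x ≤ c by linarith) 1,
      fun h => Set.indicator_of_notMem (show ¬ T x ≤ c by linarith) 1⟩
  have hlevel : ∫ x, ψ x ∂(Measure.pi fun i => gaussianReal (m i) v) = 1 - stdNormalCDF t := by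
    rw [integral_indicator_one hS, hT, ← stdNormalCDF_neg]
    congr 1
    field_simp [c]
    ring
  rw [← hlevel, beta2Star_eq_of_neymanPearson (by fun_prop) (fun _ => (Real.exp_pos _).le)
    (pi_gaussianReal_sub_eq_withDensity m r hv) (Real.exp_pos ((M - N / 2 - c) / v)).le hψ hψL,
    hψ.integral_one_sub, integral_indicator_one hS, hT, hM₁, ← stdNormalCDF_neg]
  congr 1
  field_simp [c]
  linear_combination Real.sq_sqrt hr.le

theorem beta2Star_pi_gaussianReal {ι : Type*} [Fintype ι] (m r : ι → ℝ) {v : ℝ≥0}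
    (hv : v ≠ 0) (t : ℝ) :
    beta2Star (1 - stdNormalCDF t) (Measure.pi fun i => gaussianReal (m i) v)
        (Measure.pi fun i => gaussianReal (m i - r i) v)
      = stdNormalCDF (t - √(∑ i, r i ^ 2) / √v) := by
  obtain rfl | hr := eq_or_ne r 0
  · simp only [Pi.zero_apply, sub_zero]
    rw [beta2Star_self (by linarith [stdNormalCDF_le_one t])
      (by linarith [stdNormalCDF_nonneg t])]
    simp
  · obtain ⟨j, hj⟩ := Function.ne_iff.1 hr
    exact beta2Star_pi_gaussianReal_of_sum_sq_pos m r hv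
      (Finset.sum_pos' (fun i _ => sq_nonneg _) ⟨j, Finset.mem_univ j, sq_pos_of_ne_zero hj⟩) t

/-- The optimal type-II error for testing `N(x̂, σ²I_d)` against `N(x̂ − r, σ²I_d)` at
type-I error level `1 − Φ(t)` equals `Φ(t − ‖r‖₂/σ)`. -/
theorem gaussian_optimal_type_II (d : ℕ) (σ : ℝ≥0) (hσ : 0 < σ)
    (xhat r : Fin d → ℝ) (t : ℝ) :
    beta2Star (1 - stdNormalCDF t)
        (Measure.pi fun i => ProbabilityTheory.gaussianReal (xhat i) (σ ^ 2))
        (Measure.pi fun i => ProbabilityTheory.gaussianReal (xhat i - r i) (σ ^ 2))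
      = stdNormalCDF (t - Real.sqrt (∑ i, (r i) ^ 2) / (σ : ℝ)) := by
  have h := beta2Star_pi_gaussianReal xhat r (pow_ne_zero 2 hσ.ne') t
  rwa [NNReal.coe_pow, Real.sqrt_sq σ.coe_nonneg] at h
end

section
/- Let d ∈ ℕ, e, h ∈ ℝ with e < h, and r : Fin d → ℝ. Let B := Set.univ.pi (fun i => Set.Icc e h) and B' := Set.univ.pi (fun i => Set.Icc (e − r i) (h − r i)), and let μ := ((volume B)⁻¹ • volume.restrict B) and μ' := ((volume B')⁻¹ • volume.restrict B') be the uniform probability measures on B and B'. Set b₀ := 1 − ∏ i, max 0 (1 − |r i| / (h − e)). Then for every measurable set A ⊆ (Fin d → ℝ): (μ' A).toReal ≥ (μ A).toReal − b₀. -/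
open MeasureTheory
open scoped ENNReal

/-- The uniform distributions on a box and on its shift by `r` assign probabilities to
any event differing by at most `b₀ = 1 − ∏ᵢ (1 − |rᵢ|/(h−e))₊`. -/
theorem uniform_box_shift_bound (d : ℕ) (e h : ℝ) (heh : e < h) (r : Fin d → ℝ)
    (A : Set (Fin d → ℝ)) (hA : MeasurableSet A) :
    ((((volume (Set.univ.pi fun i : Fin d => Set.Icc (e - r i) (h - r i)))⁻¹ •
          volume.restrict (Set.univ.pi fun i : Fin d => Set.Icc (e - r i) (h - r i))) A)).toReal
      ≥ ((((volume (Set.univ.pi fun _ : Fin d => Set.Icc e h))⁻¹ •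
          volume.restrict (Set.univ.pi fun _ : Fin d => Set.Icc e h)) A)).toReal
        - (1 - ∏ i, max 0 (1 - |r i| / (h - e))) := by
  have hd : (0:ℝ) < h - e := by linarith
  set B : Set (Fin d → ℝ) := Set.univ.pi fun _ : Fin d => Set.Icc e h with hBdef
  set B' : Set (Fin d → ℝ) := Set.univ.pi fun i : Fin d => Set.Icc (e - r i) (h - r i)
    with hB'def
  have hB'm : MeasurableSet B' := MeasurableSet.univ_pi fun i => measurableSet_Icc
  set v : ℝ := (h - e) ^ d with hvdef
  have hv : 0 < v := pow_pos hd d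
  have hvB : volume B = ENNReal.ofReal v := by
    rw [hBdef, volume_pi_pi]
    simp [Real.volume_Icc, Finset.prod_const, ← ENNReal.ofReal_pow hd.le, hvdef]
  have hvB' : volume B' = ENNReal.ofReal v := by
    rw [hB'def, volume_pi_pi]
    simp [Real.volume_Icc, sub_sub_sub_cancel_right, Finset.prod_const,
      ← ENNReal.ofReal_pow hd.le, hvdef]
  set w : ℝ := ∏ i, max 0 (h - e - |r i|) with hwdef
  have hw0 : 0 ≤ w := Finset.prod_nonneg fun i _ => le_max_left 0 _
  have hmm : ∀ i, min h (h - r i) - max e (e - r i) = h - e - |r i| := by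
    intro i
    rcases abs_cases (r i) with ⟨ha, hr⟩ | ⟨ha, hr⟩
    · rw [ha, min_eq_right (by linarith), max_eq_left (by linarith)]; ring
    · rw [ha, min_eq_left (by linarith), max_eq_right (by linarith)]; ring
  have hofmax : ∀ x : ℝ, ENNReal.ofReal x = ENNReal.ofReal (max 0 x) := by
    intro x
    rcases le_total x 0 with hx | hx
    · rw [ENNReal.ofReal_of_nonpos hx, max_eq_left hx, ENNReal.ofReal_zero]
    · rw [max_eq_right hx]
  have hinter : volume (B ∩ B') = ENNReal.ofReal w := by
    have hBB : B ∩ B' =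
        Set.univ.pi fun i => Set.Icc (max e (e - r i)) (min h (h - r i)) := by
      rw [hBdef, hB'def, ← Set.pi_inter_distrib]
      simp [Set.Icc_inter_Icc]
    rw [hBB, volume_pi_pi, hwdef,
      ENNReal.ofReal_prod_of_nonneg (fun i _ => le_max_left 0 _)]
    refine Finset.prod_congr rfl fun i _ => ?_
    rw [Real.volume_Icc, hmm i, hofmax]
  have hBfin : volume B ≠ ⊤ := by rw [hvB]; exact ENNReal.ofReal_ne_top
  have hB'fin : volume B' ≠ ⊤ := by rw [hvB']; exact ENNReal.ofReal_ne_top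
  have hfin1 : volume (A ∩ B) ≠ ⊤ :=
    ne_top_of_le_ne_top hBfin (measure_mono Set.inter_subset_right)
  have hfin2 : volume (A ∩ B') ≠ ⊤ :=
    ne_top_of_le_ne_top hB'fin (measure_mono Set.inter_subset_right)
  have hfin3 : volume (B \ B') ≠ ⊤ :=
    ne_top_of_le_ne_top hBfin (measure_mono Set.diff_subset)
  have hfinBB : volume (B ∩ B') ≠ ⊤ :=
    ne_top_of_le_ne_top hBfin (measure_mono Set.inter_subset_left)
  have hsplit : volume (B ∩ B') + volume (B \ B') = volume B :=
    measure_inter_add_diff B hB'm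
  have hdiff : (volume (B \ B')).toReal = v - w := by
    have h1 := congrArg ENNReal.toReal hsplit
    rw [ENNReal.toReal_add hfinBB hfin3, hinter, ENNReal.toReal_ofReal hw0, hvB,
      ENNReal.toReal_ofReal hv.le] at h1
    linarith
  have hsub : A ∩ B ⊆ (A ∩ B') ∪ (B \ B') := by
    intro x hx
    by_cases hx' : x ∈ B'
    · exact Or.inl ⟨hx.1, hx'⟩
    · exact Or.inr ⟨hx.2, hx'⟩
  have hle : volume (A ∩ B) ≤ volume (A ∩ B') + volume (B \ B') :=
    le_trans (measure_mono hsub) (measure_union_le _ _)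
  have hlereal : (volume (A ∩ B)).toReal ≤ (volume (A ∩ B')).toReal + (v - w) := by
    have h2 := ENNReal.toReal_mono (ENNReal.add_ne_top.2 ⟨hfin2, hfin3⟩) hle
    rw [ENNReal.toReal_add hfin2 hfin3, hdiff] at h2
    exact h2
  have hp : (∏ i, max 0 (1 - |r i| / (h - e))) = w / v := by
    have hvprod : v = ∏ _i : Fin d, (h - e) := by
      simp [hvdef, Finset.prod_const]
    rw [hwdef, hvprod, ← Finset.prod_div_distrib]
    refine Finset.prod_congr rfl fun i _ => ?_
    have h1 : 1 - |r i| / (h - e) = (h - e - |r i|) / (h - e) := by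
      field_simp
    rw [h1]
    rcases le_total (h - e - |r i|) 0 with hx | hx
    · rw [max_eq_left (div_nonpos_of_nonpos_of_nonneg hx hd.le), max_eq_left hx,
        zero_div]
    · rw [max_eq_right (div_nonneg hx hd.le), max_eq_right hx]
  simp only [Measure.smul_apply, smul_eq_mul, Measure.restrict_apply hA]
  rw [hvB, hvB', ENNReal.toReal_mul, ENNReal.toReal_mul, ENNReal.toReal_inv,
    ENNReal.toReal_ofReal hv.le, hp, ge_iff_le]
  set m : ℝ := (volume (A ∩ B)).toReal
  set m' : ℝ := (volume (A ∩ B')).toReal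
  have hinv : v⁻¹ * m ≤ v⁻¹ * (m' + (v - w)) :=
    mul_le_mul_of_nonneg_left hlereal (inv_nonneg.2 hv.le)
  have hvv : v⁻¹ * v = 1 := inv_mul_cancel₀ hv.ne'
  have hexp : v⁻¹ * (m' + (v - w)) = v⁻¹ * m' + v⁻¹ * v - v⁻¹ * w := by ring
  have hwv : w / v = v⁻¹ * w := by ring
  rw [hwv]
  linarith [hinv, hvv, hexp.le]
end

section
/- Let d ∈ ℕ, e, h ∈ ℝ with e < h, r : Fin d → ℝ, and W ∈ [0,1]. Let B := Set.univ.pi (fun i => Set.Icc e h) and B' := Set.univ.pi (fun i => Set.Icc (e − r i) (h − r i)), with uniform probability measures μ₀ := ((volume B)⁻¹ • volume.restrict B) and μ₁ := ((volume B')⁻¹ • volume.restrict B'). Set b₀ := 1 − ∏ i, max 0 (1 − |r i| / (h − e)). Then β₂*(1 − W; μ₀, μ₁) = max 0 (W − b₀). -/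
/-!
On the overlap `S = B ∩ B'` both uniform laws have the same density `1 / vol B`, and
`p := μ₁ S = ∏ i, (1 - |rᵢ| / (h - e))₊`. A test of level `α = 1 - W` has `∫_S φ dμ₁ ≤ α`,
so its type-II error is at least `∫_S (1 - φ) dμ₁ ≥ p - α`. The test equal to `1` on the
`μ₀`-null set `B' \ B` and to the constant `min 1 (α / p)` on `S` attains `max 0 (p - α)`.
-/

open MeasureTheory
open scoped ENNReal

open ProbabilityTheory Set

lemma min_one_div_mul_self {α p : ℝ} (hα : 0 ≤ α) (hp : 0 ≤ p) :
    min 1 (α / p) * p = min p α := by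
  rcases hp.eq_or_lt with rfl | hp
  · simp [hα]
  · rw [min_mul_of_nonneg _ _ hp.le, one_mul, div_mul_cancel₀ _ hp.ne']

section TypeIIError

variable {Ω : Type*} [MeasurableSpace Ω] {μ μ₀ μ₁ : Measure Ω} {α : ℝ} {φ : Ω → ℝ}

def IsLevelTest (α : ℝ) (μ₀ : Measure Ω) (φ : Ω → ℝ) : Prop :=
  Measurable φ ∧ (∀ x, 0 ≤ φ x ∧ φ x ≤ 1) ∧ ∫ x, φ x ∂μ₀ ≤ α

lemma IsLevelTest.integrable (hφ : IsLevelTest α μ₀ φ) (μ : Measure Ω) [IsFiniteMeasure μ] :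
    Integrable φ μ :=
  (integrable_const (1 : ℝ)).mono' hφ.1.aestronglyMeasurable <| ae_of_all _ fun x => by
    rw [Real.norm_eq_abs, abs_of_nonneg (hφ.2.1 x).1]
    exact (hφ.2.1 x).2

lemma IsLevelTest.integral_one_sub_nonneg (hφ : IsLevelTest α μ₀ φ) (μ : Measure Ω) :
    0 ≤ ∫ x, (1 - φ x) ∂μ :=
  integral_nonneg fun x => sub_nonneg.2 (hφ.2.1 x).2

lemma beta2Star_eq_of_forall_le_s13 {m : ℝ}
    (hle : ∀ φ, IsLevelTest α μ₀ φ → m ≤ ∫ x, (1 - φ x) ∂μ₁)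
    {φ₀ : Ω → ℝ} (hφ₀ : IsLevelTest α μ₀ φ₀) (heq : ∫ x, (1 - φ₀ x) ∂μ₁ = m) :
    beta2Star α μ₀ μ₁ = m := by
  have : Nonempty {φ // IsLevelTest α μ₀ φ} := ⟨⟨φ₀, hφ₀⟩⟩
  change ⨅ φ : {φ // IsLevelTest α μ₀ φ}, ∫ x, (1 - φ.1 x) ∂μ₁ = m
  refine le_antisymm ?_ (le_ciInf fun φ => hle φ.1 φ.2)
  exact heq ▸ ciInf_le ⟨m, by rintro _ ⟨φ, rfl⟩; exact hle φ.1 φ.2⟩ (⟨φ₀, hφ₀⟩ : {φ // _})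

lemma IsLevelTest.sub_le_integral_one_sub [IsFiniteMeasure μ₀] [IsFiniteMeasure μ₁]
    {S : Set Ω} (hS : μ₀.restrict S = μ₁.restrict S) (hφ : IsLevelTest α μ₀ φ) :
    μ₁.real S - α ≤ ∫ x, (1 - φ x) ∂μ₁ :=
  calc μ₁.real S - α ≤ μ₁.real S - ∫ x in S, φ x ∂μ₀ := by
        gcongr
        exact (setIntegral_le_integral (hφ.integrable μ₀)
          (ae_of_all _ fun x => (hφ.2.1 x).1)).trans hφ.2.2
    _ = ∫ x in S, (1 - φ x) ∂μ₁ := by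
        rw [hS, integral_sub (integrable_const 1) (hφ.integrable _), setIntegral_const,
          smul_eq_mul, mul_one]
    _ ≤ ∫ x, (1 - φ x) ∂μ₁ :=
        setIntegral_le_integral ((integrable_const 1).sub (hφ.integrable μ₁))
          (ae_of_all _ fun x => sub_nonneg.2 (hφ.2.1 x).2)

lemma integral_indicator_one_add_indicator_const [IsFiniteMeasure μ] {S T : Set Ω}
    (hS : MeasurableSet S) (hT : MeasurableSet T) (t : ℝ) :
    ∫ x, (T.indicator (fun _ => 1) x + S.indicator (fun _ => t) x) ∂μ =
      μ.real T + t * μ.real S := by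
  rw [integral_add ((integrable_const 1).indicator hT) ((integrable_const t).indicator hS),
    integral_indicator_const 1 hT, integral_indicator_const t hS, smul_eq_mul, smul_eq_mul,
    mul_one, mul_comm]

lemma isLevelTest_indicator_one_add_indicator_const {S T : Set Ω} (hS : MeasurableSet S)
    (hT : MeasurableSet T) (hST : Disjoint S T) {t : ℝ} (ht : t ∈ Icc 0 1)
    (hα : ∫ x, (T.indicator (fun _ => 1) x + S.indicator (fun _ => t) x) ∂μ₀ ≤ α) :
    IsLevelTest α μ₀ fun x => T.indicator (fun _ => 1) x + S.indicator (fun _ => t) x := by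
  refine ⟨(measurable_const.indicator hT).add (measurable_const.indicator hS), fun x => ?_, hα⟩
  by_cases hxT : x ∈ T
  · simp [hxT, hST.notMem_of_mem_right hxT]
  · by_cases hxS : x ∈ S <;> simp [hxT, hxS, ht.1, ht.2]

/-- The optimal test rejects on `T` and with constant probability on `S`. -/
theorem beta2Star_eq_of_restrict_eq [IsProbabilityMeasure μ₀] [IsProbabilityMeasure μ₁]
    {S T : Set Ω} (hS : MeasurableSet S) (hT : MeasurableSet T) (hST : Disjoint S T)
    (hT₀ : μ₀ T = 0) (hST₁ : μ₁ (S ∪ T)ᶜ = 0) (hμS : μ₀.restrict S = μ₁.restrict S)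
    (hα : 0 ≤ α) :
    beta2Star α μ₀ μ₁ = max 0 (μ₁.real S - α) := by
  have hp₀ : μ₀.real S = μ₁.real S := by
    rw [measureReal_def, measureReal_def, ← μ₀.restrict_apply_self, hμS,
      Measure.restrict_apply_self]
  set p := μ₁.real S
  have hT₁ : μ₁.real T = 1 - p := by
    rw [eq_sub_iff_add_eq', ← measureReal_union hST hT, measureReal_def,
      (prob_compl_eq_zero_iff (hS.union hT)).1 hST₁, ENNReal.toReal_one]
  set t := min 1 (α / p)
  have htp : t * p = min p α := min_one_div_mul_self hα measureReal_nonneg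
  have ht : t ∈ Icc 0 1 := ⟨le_min zero_le_one (div_nonneg hα measureReal_nonneg), min_le_left _ _⟩
  refine beta2Star_eq_of_forall_le_s13
    (fun φ hφ => max_le (hφ.integral_one_sub_nonneg μ₁) (hφ.sub_le_integral_one_sub hμS))
    (isLevelTest_indicator_one_add_indicator_const hS hT hST ht ?_) ?_
  · rw [integral_indicator_one_add_indicator_const hS hT, measureReal_def, hT₀, hp₀, htp]
    simp
  · have hint : Integrable (fun x => T.indicator (fun _ => 1) x + S.indicator (fun _ => t) x) μ₁ :=
      ((integrable_const 1).indicator hT).add ((integrable_const t).indicator hS)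
    rw [integral_sub (integrable_const 1) hint, integral_indicator_one_add_indicator_const hS hT,
      hT₁, htp, integral_const, probReal_univ, smul_eq_mul, mul_one,
      sub_add_eq_sub_sub, sub_sub_cancel, ← max_sub_sub_left, sub_self]

end TypeIIError

lemma cond_restrict_of_subset {Ω : Type*} [MeasurableSpace Ω] (ν : Measure Ω) {s t : Set Ω}
    (hts : t ⊆ s) : ν[|s].restrict t = (ν s)⁻¹ • ν.restrict t := by
  rw [ProbabilityTheory.cond, Measure.restrict_smul, Measure.restrict_restrict_of_subset hts]

theorem beta2Star_cond_eq {Ω : Type*} [MeasurableSpace Ω] {ν : Measure Ω} {B B' : Set Ω}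
    (hB : MeasurableSet B) (hB' : MeasurableSet B') (hν : ν B' = ν B) (hν₀ : ν B ≠ 0)
    (hν_top : ν B ≠ ∞) {α : ℝ} (hα : 0 ≤ α) :
    beta2Star α ν[|B] ν[|B'] = max 0 (ν.real (B ∩ B') / ν.real B - α) := by
  have := cond_isProbabilityMeasure_of_finite hν₀ hν_top
  have := cond_isProbabilityMeasure_of_finite (hν ▸ hν₀) (hν ▸ hν_top)
  have hoverlap : ν[|B'].real (B ∩ B') = ν.real (B ∩ B') / ν.real B := by
    rw [measureReal_def, cond_apply hB', inter_left_comm, inter_self, ENNReal.toReal_mul,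
      ENNReal.toReal_inv, hν, div_eq_inv_mul, measureReal_def, measureReal_def]
  rw [← hoverlap]
  refine beta2Star_eq_of_restrict_eq (hB.inter hB') (hB'.diff hB)
    (disjoint_sdiff_right.mono_left inter_subset_left) ?_ ?_ ?_ hα
  · rw [cond_apply hB, inter_sdiff_self, measure_empty, mul_zero]
  · rw [inter_comm, inter_union_sdiff, cond_apply hB', inter_compl_self, measure_empty, mul_zero]
  · rw [cond_restrict_of_subset ν inter_subset_left, cond_restrict_of_subset ν inter_subset_right,
      hν]

lemma volume_real_Icc_inter_Icc_sub (a b s : ℝ) :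
    volume.real (Icc a b ∩ Icc (a - s) (b - s)) = max (b - a - |s|) 0 := by
  rw [Icc_inter_Icc, Real.volume_real_Icc]
  congr 1
  rcases le_total 0 s with hs | hs
  · rw [abs_of_nonneg hs, min_eq_right (by linarith), max_eq_left (by linarith)]
    ring_nf
  · rw [abs_of_nonpos hs, min_eq_left (by linarith), max_eq_right (by linarith)]
    ring_nf

lemma volume_real_pi_Icc_inter_div {ι : Type*} [Fintype ι] {a b : ℝ} (hab : a < b)
    (c : ι → ℝ) :
    volume.real ((univ.pi fun _ : ι => Icc a b) ∩ univ.pi fun i => Icc (a - c i) (b - c i)) /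
        volume.real (univ.pi fun _ : ι => Icc a b) = ∏ i, max 0 (1 - |c i| / (b - a)) := by
  have hba : 0 < b - a := sub_pos.2 hab
  rw [← pi_inter_distrib, measureReal_def, measureReal_def, volume_pi_pi, volume_pi_pi,
    ENNReal.toReal_prod, ENNReal.toReal_prod]
  simp only [← measureReal_def, volume_real_Icc_inter_Icc_sub, Real.volume_real_Icc_of_le hab.le]
  rw [← Finset.prod_div_distrib]
  refine Finset.prod_congr rfl fun i _ => ?_
  rw [← max_div_div_right hba.le, zero_div, max_comm, sub_div, div_self hba.ne']

/-- The optimal type-II error for testing the uniform distribution on `[e,h]^d` (null)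
against the uniform distribution on its shift by `r` (alternative) at type-I level
`1 − W` equals `max 0 (W − b₀)` with `b₀ = 1 − ∏ᵢ (1 − |rᵢ|/(h−e))₊`. -/
theorem uniform_optimal_type_II (d : ℕ) (e h : ℝ) (heh : e < h) (r : Fin d → ℝ)
    (W : ℝ) (hW : W ∈ Set.Icc (0 : ℝ) 1) :
    beta2Star (1 - W)
        ((volume (Set.univ.pi fun _ : Fin d => Set.Icc e h))⁻¹ •
          volume.restrict (Set.univ.pi fun _ : Fin d => Set.Icc e h))
        ((volume (Set.univ.pi fun i : Fin d => Set.Icc (e - r i) (h - r i)))⁻¹ •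
          volume.restrict (Set.univ.pi fun i : Fin d => Set.Icc (e - r i) (h - r i)))
      = max 0 (W - (1 - ∏ i, max 0 (1 - |r i| / (h - e)))) := by
  have hbox (c : Fin d → ℝ) :
      volume (univ.pi fun i => Icc (e - c i) (h - c i)) = ENNReal.ofReal (h - e) ^ d := by
    rw [volume_pi_pi]
    simp [Real.volume_Icc]
  have hB : volume (univ.pi fun _ : Fin d => Icc e h) = ENNReal.ofReal (h - e) ^ d := by
    simpa using hbox 0
  rw [← volume_real_pi_Icc_inter_div heh r, show ∀ q : ℝ, W - (1 - q) = q - (1 - W) from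
    fun q => by ring]
  exact beta2Star_cond_eq (.univ_pi fun _ => measurableSet_Icc)
    (.univ_pi fun _ => measurableSet_Icc) ((hbox r).trans hB.symm) (by rw [hB]; simp [heh])
    (by rw [hB]; finiteness) (sub_nonneg.2 hW.2)
end

section
/- Let d, K ∈ ℕ with K ≥ 1, e, h ∈ ℝ with e < h, R ≥ 0, and let ν := ((volume B₀)⁻¹ • volume.restrict B₀) be the uniform probability measure on B₀ := Set.univ.pi (fun i => Set.Icc e h) ⊆ (Fin d → ℝ). Let f : (Fin d → ℝ) → ℕ be measurable, ŷ ∈ ℕ, x, r : Fin K → (Fin d → ℝ) with ‖r k‖₂ ≤ R for all k, and let W ∈ [0,1], τ ∈ ℝ. If (ν {ε | f (x k + r k + ε) = ŷ}).toReal ≥ W for every k, and W > τ + 1 − (max 0 (1 − R / (h − e)))^d, then (ν {ε | f (x k + ε) = ŷ}).toReal > τ for every k. -/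
/-!
The uniform law on the box `B` is Lebesgue measure conditioned on `B`. By translation invariance
of Lebesgue measure, shifting the noise by `r` changes the probability of an event by at most the
conditional mass of the part of `B` that the shift pushes out of `B`. The box and its translate
overlap in a box with sides `(h - e) - |rᵢ| ≥ (h - e) - R`, so that mass is at most
`1 - (1 - R / (h - e))₊ ^ d`, and `|rᵢ| ≤ ‖r‖₂ ≤ R`.
-/

open MeasureTheory ProbabilityTheory Set
open scoped ENNReal

section Translation

variable {G : Type*} [MeasurableSpace G] [AddGroup G] [MeasurableAdd G]
  (μ : Measure G) [μ.IsAddRightInvariant] {B : Set G}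

theorem cond_preimage_add_le (hB : MeasurableSet B) (A : Set G) (v : G) :
    μ[(· + v) ⁻¹' A | B] ≤ μ[A | B] + μ[((· + v) ⁻¹' B)ᶜ | B] := by
  simp only [cond_apply hB, ← mul_add]
  gcongr
  calc μ (B ∩ (· + v) ⁻¹' A)
      ≤ μ ((· + v) ⁻¹' (B ∩ A) ∪ B ∩ ((· + v) ⁻¹' B)ᶜ) := by
        refine measure_mono fun z ⟨hzB, hzA⟩ => ?_
        by_cases hz : z + v ∈ B
        · exact Or.inl ⟨hz, hzA⟩
        · exact Or.inr ⟨hzB, hz⟩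
    _ ≤ μ ((· + v) ⁻¹' (B ∩ A)) + μ (B ∩ ((· + v) ⁻¹' B)ᶜ) := measure_union_le _ _
    _ = μ (B ∩ A) + μ (B ∩ ((· + v) ⁻¹' B)ᶜ) := by rw [measure_preimage_add_right]

theorem cond_real_preimage_add_le (hB : MeasurableSet B) (hB₀ : μ B ≠ 0) (hB_top : μ B ≠ ∞)
    (A : Set G) (v : G) :
    (μ[|B]).real ((· + v) ⁻¹' A) ≤ (μ[|B]).real A + 1 - (μ[|B]).real ((· + v) ⁻¹' B) := by
  have := cond_isProbabilityMeasure_of_finite hB₀ hB_top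
  rw [add_sub_assoc, ← probReal_compl_eq_one_sub (measurable_add_const v hB),
    measureReal_def, measureReal_def, measureReal_def,
    ← ENNReal.toReal_add (by finiteness) (by finiteness)]
  exact ENNReal.toReal_mono (by finiteness) (cond_preimage_add_le μ hB A v)

end Translation

theorem Real.volume_preimage_add_Icc_inter_Icc (e h v : ℝ) :
    volume ((· + v) ⁻¹' Icc e h ∩ Icc e h) = ENNReal.ofReal (h - e - |v|) := by
  rw [preimage_add_const_Icc, Icc_inter_Icc, Real.volume_Icc]
  congr 1
  rcases le_total 0 v with hv | hv
  · rw [abs_of_nonneg hv, max_eq_right (by linarith), min_eq_left (by linarith)]; ring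
  · rw [abs_of_nonpos hv, max_eq_left (by linarith), min_eq_right (by linarith)]; ring

theorem volume_preimage_add_pi_Icc_inter {ι : Type*} [Fintype ι] (e h : ℝ) (v : ι → ℝ) :
    volume ((· + v) ⁻¹' univ.pi (fun _ => Icc e h) ∩ univ.pi (fun _ => Icc e h)) =
      ∏ i, ENNReal.ofReal (h - e - |v i|) := by
  have : (· + v) ⁻¹' univ.pi (fun _ : ι => Icc e h) ∩ univ.pi (fun _ => Icc e h) =
      univ.pi fun i => (· + v i) ⁻¹' Icc e h ∩ Icc e h := by
    ext z
    simp only [mem_inter_iff, mem_preimage, mem_univ_pi, Pi.add_apply, forall_and]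
  simp_rw [this, volume_pi_pi, Real.volume_preimage_add_Icc_inter_Icc]

theorem ofReal_one_sub_div_pow_le_cond_preimage_add {ι : Type*} [Fintype ι] {e h R : ℝ}
    (heh : e < h) {v : ι → ℝ} (hv : ∀ i, |v i| ≤ R) :
    ENNReal.ofReal (1 - R / (h - e)) ^ Fintype.card ι ≤
      volume[(· + v) ⁻¹' univ.pi (fun _ => Icc e h) | univ.pi (fun _ => Icc e h)] := by
  have hhe : 0 < h - e := sub_pos.2 heh
  rw [cond_apply (MeasurableSet.univ_pi fun _ => measurableSet_Icc), inter_comm,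
    volume_preimage_add_pi_Icc_inter, volume_pi_pi]
  simp only [Real.volume_Icc, Finset.prod_const, Finset.card_univ]
  rw [one_sub_div hhe.ne', ENNReal.ofReal_div_of_pos hhe, div_eq_mul_inv, mul_pow,
    ← ENNReal.inv_pow, mul_comm]
  gcongr
  exact Finset.pow_card_le_prod _ _ _ fun i _ => ENNReal.ofReal_le_ofReal (by linarith [hv i])

theorem abs_le_sqrt_sum_sq {ι : Type*} [Fintype ι] (v : ι → ℝ) (i : ι) :
    |v i| ≤ √(∑ j, v j ^ 2) := by
  rw [← Real.sqrt_sq_eq_abs]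
  exact Real.sqrt_le_sqrt (Finset.single_le_sum (fun j _ => sq_nonneg (v j)) (Finset.mem_univ i))

theorem certified_watermark_uniform_general (d K : ℕ)
    (e h : ℝ) (heh : e < h) (R : ℝ)
    (f : (Fin d → ℝ) → ℕ) (yhat : ℕ)
    (x r : Fin K → (Fin d → ℝ)) (hr : ∀ k, Real.sqrt (∑ i, (r k i) ^ 2) ≤ R)
    (W : ℝ) (τ : ℝ)
    (hWR : ∀ k, ((((volume (Set.univ.pi fun _ : Fin d => Set.Icc e h))⁻¹ •
          volume.restrict (Set.univ.pi fun _ : Fin d => Set.Icc e h))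
        {ε : Fin d → ℝ | f (x k + r k + ε) = yhat}).toReal ≥ W))
    (hcond : W > τ + 1 - (max 0 (1 - R / (h - e))) ^ d) :
    ∀ k, ((((volume (Set.univ.pi fun _ : Fin d => Set.Icc e h))⁻¹ •
          volume.restrict (Set.univ.pi fun _ : Fin d => Set.Icc e h))
        {ε : Fin d → ℝ | f (x k + ε) = yhat}).toReal > τ) := by
  intro k
  have hvolB : volume (univ.pi fun _ : Fin d => Icc e h) = ENNReal.ofReal (h - e) ^ d := by
    rw [volume_pi_pi]
    simp only [Real.volume_Icc, Finset.prod_const, Finset.card_univ, Fintype.card_fin]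
  have hshift : {ε | f (x k + r k + ε) = yhat} = (· + r k) ⁻¹' {ε | f (x k + ε) = yhat} := by
    ext ε; simp [add_assoc, add_comm (r k)]
  have hstable := cond_real_preimage_add_le volume
    (MeasurableSet.univ_pi fun _ => measurableSet_Icc)
    (by rw [hvolB]; exact pow_ne_zero _ (ENNReal.ofReal_pos.2 (sub_pos.2 heh)).ne')
    (by rw [hvolB]; finiteness) {ε | f (x k + ε) = yhat} (r k)
  have hoverlap := ENNReal.toReal_mono (measure_ne_top _ _)
    (ofReal_one_sub_div_pow_le_cond_preimage_add heh
      fun i => (abs_le_sqrt_sum_sq (r k) i).trans (hr k))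
  rw [ENNReal.toReal_pow, ENNReal.toReal_ofReal', max_comm, Fintype.card_fin,
    ← measureReal_def] at hoverlap
  have hWk := hWR k
  rw [hshift] at hWk
  -- `(μ B)⁻¹ • μ.restrict B` is `μ[|B]` by definition.
  change (volume[|univ.pi fun _ : Fin d => Icc e h]).real _ ≥ W at hWk
  change (volume[|univ.pi fun _ : Fin d => Icc e h]).real _ > τ
  linarith

/-- Example 2 (Robustness Conditions under Uniform Distribution), guarantee direction:
if the watermark robustness `W` exceeds `τ + 1 − (1 − R/(h−e))₊^d`, then the stability
exceeds `τ`. -/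
theorem certified_watermark_uniform (d K : ℕ) (hK : 1 ≤ K)
    (e h : ℝ) (heh : e < h) (R : ℝ) (hR : 0 ≤ R)
    (f : (Fin d → ℝ) → ℕ) (hf : Measurable f) (yhat : ℕ)
    (x r : Fin K → (Fin d → ℝ)) (hr : ∀ k, Real.sqrt (∑ i, (r k i) ^ 2) ≤ R)
    (W : ℝ) (hW : W ∈ Set.Icc (0 : ℝ) 1) (τ : ℝ)
    (hWR : ∀ k, ((((volume (Set.univ.pi fun _ : Fin d => Set.Icc e h))⁻¹ •
          volume.restrict (Set.univ.pi fun _ : Fin d => Set.Icc e h))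
        {ε : Fin d → ℝ | f (x k + r k + ε) = yhat}).toReal ≥ W))
    (hcond : W > τ + 1 - (max 0 (1 - R / (h - e))) ^ d) :
    ∀ k, ((((volume (Set.univ.pi fun _ : Fin d => Set.Icc e h))⁻¹ •
          volume.restrict (Set.univ.pi fun _ : Fin d => Set.Icc e h))
        {ε : Fin d → ℝ | f (x k + ε) = yhat}).toReal > τ) :=
  certified_watermark_uniform_general d K e h heh R f yhat x r hr W τ hWR hcond
end

section
/- Let n ∈ ℕ with n ≥ 1, let v : Fin n → ℝ, and let e : Fin n ≃ Fin n be a permutation such that v ∘ e is monotone. Let W ∈ ℝ, α₀ ∈ ℝ with 0 < α₀ < 1, and let k := ⌊α₀ * (n + 1)⌋ (as a natural number), with k < n. Then (1 + (Finset.card {j : Fin n | v j < W} : ℝ)) / (n + 1) ≥ 1 − α₀ if and only if v (e ⟨n − k − 1, _⟩) < W, i.e., if and only if W strictly exceeds the (n − k)-th smallest of the values v j. -/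
open scoped Classical

/-- The conformal-prediction verification criterion (Proposition 1 and Remark 2):
the p-value `p = (1 + #{j : v j < W})/(n + 1)` satisfies `p ≥ 1 − α₀` exactly when `W`
strictly exceeds the `(n − ⌊α₀(n+1)⌋)`-th smallest calibration value. -/
theorem conformal_verification (n : ℕ) (hn : 1 ≤ n) (v : Fin n → ℝ)
    (e : Fin n ≃ Fin n) (hmono : Monotone (v ∘ e))
    (W α₀ : ℝ) (hα₀ : 0 < α₀) (hα₁ : α₀ < 1)
    (k : ℕ) (hk : k = ⌊α₀ * ((n : ℝ) + 1)⌋₊) (hkn : k < n) :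
    (1 + ((Finset.univ.filter fun j : Fin n => v j < W).card : ℝ)) / ((n : ℝ) + 1)
        ≥ 1 - α₀
      ↔ v (e ⟨n - k - 1, by omega⟩) < W := by
  set s := Finset.univ.filter fun j : Fin n => v j < W with hs
  set c := s.card with hc
  have hcn : c ≤ n := by
    have := Finset.card_filter_le (Finset.univ : Finset (Fin n))
      (fun j : Fin n => v j < W)
    simpa [← hs, ← hc] using this
  have hcard : (Finset.univ.filter fun j : Fin n => v (e j) < W).card = c := by
    rw [hc, hs]
    apply Finset.card_bij (fun j _ => e j)
    · intro a ha
      simp only [Finset.mem_filter, Finset.mem_univ, true_and] at ha ⊢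
      exact ha
    · intro a _ b _ hab
      exact e.injective hab
    · intro b hb
      refine ⟨e.symm b, ?_, by simp⟩
      simp only [Finset.mem_filter, Finset.mem_univ, true_and] at hb ⊢
      simpa using hb
  have key : ∀ i : Fin n, v (e i) < W ↔ (i : ℕ) < c := by
    intro i
    constructor
    · intro h
      have hsub : Finset.Iic i ⊆ Finset.univ.filter fun j : Fin n => v (e j) < W := by
        intro j hj
        simp only [Finset.mem_Iic] at hj
        simp only [Finset.mem_filter, Finset.mem_univ, true_and]
        exact lt_of_le_of_lt (hmono hj) h
      have hle := Finset.card_le_card hsub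
      rw [hcard, Fin.card_Iic] at hle
      omega
    · intro h
      by_contra hnot
      push_neg at hnot
      have hsub : (Finset.univ.filter fun j : Fin n => v (e j) < W) ⊆ Finset.Iio i := by
        intro j hj
        simp only [Finset.mem_filter, Finset.mem_univ, true_and] at hj
        simp only [Finset.mem_Iio]
        by_contra hji
        push_neg at hji
        exact absurd (lt_of_lt_of_le hj (le_trans hnot (hmono hji))) (lt_irrefl _)
      have hle := Finset.card_le_card hsub
      rw [hcard, Fin.card_Iio] at hle
      omega
  have hD : (1 - α₀ ≤ (1 + (c : ℝ)) / ((n : ℝ) + 1)) ↔ (n - c ≤ k) := by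
    rw [le_div_iff₀ (by positivity)]
    constructor
    · intro h
      have hreal : ((n - c : ℕ) : ℝ) ≤ α₀ * ((n : ℝ) + 1) := by
        push_cast [Nat.cast_sub hcn]
        nlinarith
      exact hk ▸ Nat.le_floor hreal
    · intro h
      have h' : ((n - c : ℕ) : ℝ) ≤ α₀ * ((n : ℝ) + 1) := by
        rw [hk] at h
        exact le_trans (Nat.cast_le.2 h) (Nat.floor_le (by positivity))
      push_cast [Nat.cast_sub hcn] at h'
      nlinarith
  rw [ge_iff_le, hD, key]
  simp only []
  omega
end
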